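/- Let C be an [n,k]-linear code over F_q with k ≥ 2. If d_p^{k-1}(C) = d_p^k(C), then d_H^k(C) = n, i.e., the Hamming support of C is all of {0,...,n-1}. -/

import Mathlib

/-- The pair support of a subspace `D ≤ F^n` (indices mod `n`). -/
def pairSupport {F : Type*} [Field F] {n : ℕ} [NeZero n] (D : Submodule F (Fin n → F)) :
    Set (Fin n) :=
  {i | ∃ x ∈ D, x i ≠ 0 ∨ x (i + 1) ≠ 0}

/-- The `r`-minimal pair weight `d_p^r(C)` of a linear code `C ≤ F^n`. -/
noncomputable def dp {F : Type*} [Field F] {n : ℕ} [NeZero n]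
    (C : Submodule F (Fin n → F)) (r : ℕ) : ℕ :=
  sInf {m | ∃ D : Submodule F (Fin n → F), D ≤ C ∧ Module.finrank F D = r ∧
    (pairSupport D).ncard = m}

/-- The Hamming support of a subspace `D ≤ F^n`. -/
def hammingSupport {F : Type*} [Field F] {n : ℕ} (D : Submodule F (Fin n → F)) : Set (Fin n) :=
  {i | ∃ x ∈ D, x i ≠ 0}

/-!
If the Hamming support of `C` is a proper nonempty subset of the cycle `ℤ/n`, it contains an
index `i` with `i + 1` outside it. The codimension-one subcode `D = {c ∈ C | c i = 0}` then
vanishes at both `i` and `i + 1`, so its pair support misses `i`, which lies in the pair support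
of `C`. Hence `d_p^{k-1}(C) ≤ w_p(D) < w_p(C) = d_p^k(C)`.
-/

open Module

open Fin.NatCast Fin.CommRing in
theorem Fin.eq_univ_of_add_one_mem {n : ℕ} [NeZero n] {s : Set (Fin n)}
    (hs : ∀ i ∈ s, i + 1 ∈ s) {i : Fin n} (hi : i ∈ s) : s = Set.univ := by
  have hshift : ∀ m : ℕ, i + (m : Fin n) ∈ s := by
    intro m
    induction m with
    | zero => simpa using hi
    | succ m ih => simpa [add_assoc] using hs _ ih
  refine Set.eq_univ_of_forall fun j => ?_
  simpa [Fin.cast_val_eq_self] using hshift (j - i).val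

theorem Submodule.finrank_inf_ker_add_one {K V : Type*} [Field K] [AddCommGroup V] [Module K V]
    {C : Submodule K V} [FiniteDimensional K C] {φ : Dual K V} {x : V} (hx : x ∈ C)
    (hφx : φ x ≠ 0) : finrank K (C ⊓ LinearMap.ker φ : Submodule K V) + 1 = finrank K C := by
  have hφC : φ.domRestrict C ≠ 0 := fun h =>
    hφx (by simpa using LinearMap.congr_fun h ⟨x, hx⟩)
  rw [← Submodule.map_comap_subtype, Submodule.finrank_map_subtype_eq,
    ← LinearMap.ker_domRestrict]
  exact Dual.finrank_ker_add_one_of_ne_zero hφC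

section PairWeight

variable {F : Type*} [Field F] {n : ℕ} [NeZero n]

theorem pairSupport_mono {D C : Submodule F (Fin n → F)} (hDC : D ≤ C) :
    pairSupport D ⊆ pairSupport C :=
  fun _ ⟨x, hx, hxi⟩ => ⟨x, hDC hx, hxi⟩

theorem hammingSupport_subset_pairSupport (C : Submodule F (Fin n → F)) :
    hammingSupport C ⊆ pairSupport C :=
  fun _ ⟨x, hx, hxi⟩ => ⟨x, hx, Or.inl hxi⟩

theorem notMem_pairSupport_inf_ker_proj {C : Submodule F (Fin n → F)} {i : Fin n}
    (hi : i + 1 ∉ hammingSupport C) :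
    i ∉ pairSupport (C ⊓ LinearMap.ker (LinearMap.proj i)) := by
  rintro ⟨x, ⟨hxC, hxi⟩, hx | hx⟩
  · exact hx hxi
  · exact hi ⟨x, hxC, hx⟩

theorem dp_le_ncard_pairSupport {C D : Submodule F (Fin n → F)} (hDC : D ≤ C) :
    dp C (finrank F D) ≤ (pairSupport D).ncard :=
  Nat.sInf_le ⟨D, hDC, rfl, rfl⟩

theorem dp_finrank (C : Submodule F (Fin n → F)) :
    dp C (finrank F C) = (pairSupport C).ncard := by
  refine le_antisymm (dp_le_ncard_pairSupport le_rfl) (le_csInf ⟨_, C, le_rfl, rfl, rfl⟩ ?_)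
  rintro _ ⟨D, hDC, hD, rfl⟩
  rw [Submodule.eq_of_le_of_finrank_eq hDC hD]

end PairWeight

theorem dHk_eq_n_of_dp_eq_general {F : Type*} [Field F] {n k : ℕ} [NeZero n]
    (C : Submodule F (Fin n → F)) (hC : Module.finrank F C = k) (hk : 2 ≤ k)
    (h : dp C (k - 1) = dp C k) :
    (hammingSupport C).ncard = n := by
  suffices hne : hammingSupport C = Set.univ by simp [hne]
  by_contra hne
  obtain ⟨x, hxC, hx0⟩ := Submodule.exists_mem_ne_zero_of_ne_bot fun hC0 : C = ⊥ => by
    rw [hC0, finrank_bot] at hC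
    omega
  obtain ⟨i₀, hi₀⟩ := Function.ne_iff.mp hx0
  obtain ⟨i, hi, hi1⟩ : ∃ i ∈ hammingSupport C, i + 1 ∉ hammingSupport C := by
    by_contra! hclosed
    exact hne (Fin.eq_univ_of_add_one_mem hclosed ⟨x, hxC, hi₀⟩)
  obtain ⟨y, hyC, hyi⟩ := hi
  set D := C ⊓ LinearMap.ker (LinearMap.proj i : Dual F (Fin n → F))
  have hD : finrank F D = k - 1 := by
    have : finrank F D + 1 = k := hC ▸ Submodule.finrank_inf_ker_add_one hyC hyi
    omega
  have hDC : (pairSupport D).ncard < (pairSupport C).ncard :=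
    Set.ncard_lt_ncard <| (pairSupport_mono inf_le_left).ssubset_of_not_subset fun hsub =>
      notMem_pairSupport_inf_ker_proj hi1 <|
        hsub (hammingSupport_subset_pairSupport C ⟨y, hyC, hyi⟩)
  have hdpD : dp C (k - 1) ≤ (pairSupport D).ncard := hD ▸ dp_le_ncard_pairSupport inf_le_left
  have hdpC : dp C k = (pairSupport C).ncard := hC ▸ dp_finrank C
  omega

theorem dHk_eq_n_of_dp_eq {F : Type*} [Field F] [Fintype F] {n k : ℕ} [NeZero n]
    (C : Submodule F (Fin n → F)) (hC : Module.finrank F C = k) (hk : 2 ≤ k)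
    (h : dp C (k - 1) = dp C k) :
    (hammingSupport C).ncard = n :=
  dHk_eq_n_of_dp_eq_general C hC hk h
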